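/- Let g = g_{5,3,6(λ)} and let F = (α, β, γ, δ, σ) ∈ g*. Then: (1) if γ = δ = σ = 0 then Ω_F = {F}; (2) if γ = δ = 0, σ ≠ 0 then Ω_F = {(α, y, 0, 0, s) : y ∈ ℝ, σs > 0}; (3) if γ = 0, δ ≠ 0, σ = 0 then Ω_F = {(α, y, 0, t, 0) : y ∈ ℝ, δt > 0}; (4) if γ = 0, δ ≠ 0, σ ≠ 0 then Ω_F = {(α, y, 0, t, s) : y ∈ ℝ, δt > 0, s = σ(t/δ)^{λ}}; (5) if γ ≠ 0, δ = σ = 0 then Ω_F = {(x, y, z, t, 0) : y ∈ ℝ, γz > 0, x = α + γ − z, t = z·ln(z/γ)}; (6) if γ ≠ 0, δ = 0, σ ≠ 0 then Ω_F = {(x, y, z, t, s) : y ∈ ℝ, γz > 0 (equivalently σs > 0), x = α + γ − z, t = z·ln(z/γ), s = σ(z/γ)^{λ}}; (7) if γ ≠ 0, δ ≠ 0, σ = 0 then Ω_F = {(x, y, z, t, 0) : y ∈ ℝ, γz > 0, x = α + γ − z, t = z·ln(z/γ) + δ·z/γ}; (8) if γ ≠ 0, δ ≠ 0, σ ≠ 0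 then Ω_F = {(x, y, z, t, s) : y ∈ ℝ, γz > 0, x = α + γ − z, t = z·ln(z/γ) + δ·z/γ, s = σ(z/γ)^{λ}}. -/

import Mathlib

/-- The Lie bracket of g_{5,3,6(λ)}: [X1,X2] = X3, [X2,X3] = X3, [X2,X4] = X3 + X4, [X2,X5] = λ·X5,
written in coordinates with respect to the basis (X₁, X₂, X₃, X₄, X₅) (all other
brackets of basis vectors vanish); it is the bilinear extension of the structure
constants above. -/
def bracketg536 (l : ℝ) (U V : Fin 5 → ℝ) : Fin 5 → ℝ :=
  ![0, 0,
    (U 0 * V 1 - U 1 * V 0) + (U 1 * V 2 - U 2 * V 1) + (U 1 * V 3 - U 3 * V 1),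
    U 1 * V 3 - U 3 * V 1,
    l * (U 1 * V 4 - U 4 * V 1)]

/-- The matrix of the adjoint endomorphism ad_U = [U, ·] in the basis (X₁, ..., X₅):
column j holds the coordinates of [U, Xⱼ]. -/
def adg536 (l : ℝ) (U : Fin 5 → ℝ) : Matrix (Fin 5) (Fin 5) ℝ :=
  Matrix.of fun i j => bracketg536 l U (Pi.single j 1) i

/-- The orbit Ω_F = { F ∘ exp(ad_U) : U ∈ g } in coordinates with respect to the dual
basis: a functional F' is identified with the vector (F'(X₁), ..., F'(X₅)), so that
F ∘ exp(ad_U) corresponds to the row-vector–matrix product vecMul F (exp (ad_U)). -/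
noncomputable def orbitg536 (l : ℝ) (F : Fin 5 → ℝ) : Set (Fin 5 → ℝ) :=
  Set.range fun U : Fin 5 → ℝ => Matrix.vecMul F (NormedSpace.exp (adg536 l U))

/-!
For `U = Σ uᵢ Xᵢ` put `a = u₂`. The matrix of `ad_U` has zero first two rows and acts on
`X₃, X₄, X₅` by the Jordan-type block `a·[[1,1,0],[0,1,0],[0,0,λ]]`, so the exponential series
can be summed in closed form: `F ∘ exp(ad_U)` has coordinates
`(α + γ(1 - eᵃ), *, γ eᵃ, (δ + γ a) eᵃ, σ e^{λa})`, where the second coordinate is an affine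
function of `u₁ - u₃, u₄, u₅` whose slopes vanish simultaneously only when `γ = δ = λσ = 0`.
Writing `w = eᵃ > 0`, the orbit is `{(α + γ(1 - w), y, γw, (δ + γ log w) w, σ w^λ) : w > 0, y ∈ ℝ}`,
and eliminating `w` (through `z/γ`, `t/δ` or `(s/σ)^{1/λ}`) gives the eight descriptions.
-/

open Real Matrix
open scoped Nat

section OrderedField

variable {K : Type*} [Field K] [LinearOrder K] [IsStrictOrderedRing K] {a b : K}

lemma div_pos_of_mul_pos (h : 0 < a * b) : 0 < b / a :=
  div_pos_iff.2 ((mul_pos_iff.1 h).imp And.symm And.symm)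

lemma mul_mul_pos_of_ne_zero (ha : a ≠ 0) (hb : 0 < b) : 0 < a * (a * b) := by
  rw [← mul_assoc]
  exact mul_pos (mul_self_pos.2 ha) hb

end OrderedField

noncomputable def expSubOneDiv (x : ℝ) : ℝ := if x = 0 then 1 else (exp x - 1) / x

lemma hasSum_pow_div_factorial (x : ℝ) : HasSum (fun n : ℕ => x ^ n / n !) (exp x) := by
  rw [exp_eq_exp_ℝ]
  exact NormedSpace.expSeries_div_hasSum_exp x

lemma hasSum_pow_succ_div_factorial_succ (x : ℝ) :
    HasSum (fun n : ℕ => x ^ (n + 1) / (n + 1)!) (exp x - 1) := by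
  simpa using (hasSum_nat_add_iff' 1).mpr (hasSum_pow_div_factorial x)

lemma hasSum_expSubOneDiv (x : ℝ) :
    HasSum (fun n : ℕ => x ^ n / (n + 1)!) (expSubOneDiv x) := by
  by_cases hx : x = 0
  · subst hx
    convert hasSum_ite_eq 0 (1 : ℝ) using 1
    · funext n; cases n <;> simp
    · simp [expSubOneDiv]
  · rw [expSubOneDiv, if_neg hx]
    have hterm : (fun n : ℕ => x ^ n / (n + 1)!) = fun n => x ^ (n + 1) / (n + 1)! / x := by
      funext n
      field_simp
      ring
    rw [hterm]
    exact (hasSum_pow_succ_div_factorial_succ x).div_const x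

lemma expSubOneDiv_pos (x : ℝ) : 0 < expSubOneDiv x := by
  unfold expSubOneDiv
  split_ifs with hx
  · exact one_pos
  · rcases lt_or_gt_of_ne hx with hneg | hpos
    · exact div_pos_of_neg_of_neg (by linarith [exp_lt_one_iff.mpr hneg]) hneg
    · exact div_pos (by linarith [add_one_lt_exp hx]) hpos

lemma Matrix.hasSum_vecMul_exp {n : Type*} [Fintype n] [DecidableEq n] (v : n → ℝ)
    (A : Matrix n n ℝ) :
    HasSum (fun k : ℕ => (k !⁻¹ : ℝ) • (v ᵥ* A ^ k)) (v ᵥ* NormedSpace.exp A) := by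
  -- Any algebra norm gives access to the exponential series; this one induces the entrywise topology.
  let _ : NormedRing (Matrix n n ℝ) := Matrix.linftyOpNormedRing
  let _ : NormedAlgebra ℝ (Matrix n n ℝ) := Matrix.linftyOpNormedAlgebra
  let vecMulHom : Matrix n n ℝ →+ (n → ℝ) := AddMonoidHom.mk' (v ᵥ* ·) fun A B => vecMul_add A B v
  have h := (NormedSpace.exp_series_hasSum_exp' (𝕂 := ℝ) A).map vecMulHom
    (continuous_const.matrix_vecMul continuous_id)
  simp only [vecMulHom, Function.comp_def, AddMonoidHom.mk'_apply, vecMul_smul] at h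
  exact h

lemma vecMul_adg536 (l : ℝ) (v U : Fin 5 → ℝ) :
    v ᵥ* adg536 l U = ![-(U 1 * v 2), (U 0 - U 2 - U 3) * v 2 - U 3 * v 3 - l * U 4 * v 4,
      U 1 * v 2, U 1 * (v 2 + v 3), l * U 1 * v 4] := by
  ext j
  fin_cases j <;>
    simp [vecMul, dotProduct, Fin.sum_univ_five, adg536, bracketg536, Pi.single_apply] <;> ring

lemma vecMul_adg536_pow_succ (l α β γ δ σ : ℝ) (U : Fin 5 → ℝ) (n : ℕ) :
    ![α, β, γ, δ, σ] ᵥ* adg536 l U ^ (n + 1) =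
      ![-(γ * U 1 ^ (n + 1)),
        (γ * (U 0 - U 2) - δ * U 3 - (n + 1) * γ * U 3 - l ^ (n + 1) * σ * U 4) * U 1 ^ n,
        γ * U 1 ^ (n + 1), (δ + (n + 1) * γ) * U 1 ^ (n + 1), σ * (l * U 1) ^ (n + 1)] := by
  induction n with
  | zero =>
    rw [zero_add, pow_one, vecMul_adg536]
    ext j
    fin_cases j <;> simp <;> ring
  | succ n ih =>
    rw [pow_succ, ← vecMul_vecMul, ih, vecMul_adg536]
    ext j
    fin_cases j <;> simp <;> ring

lemma vecMul_exp_adg536 (l α β γ δ σ : ℝ) (U : Fin 5 → ℝ) :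
    ![α, β, γ, δ, σ] ᵥ* NormedSpace.exp (adg536 l U) =
      ![α + γ * (1 - exp (U 1)),
        β + (γ * (U 0 - U 2) - δ * U 3) * expSubOneDiv (U 1) - γ * U 3 * exp (U 1)
          - l * σ * U 4 * expSubOneDiv (l * U 1),
        γ * exp (U 1), (δ + γ * U 1) * exp (U 1), σ * exp (l * U 1)] := by
  have hfact (n : ℕ) : ((n + 1)! : ℝ) = (n + 1) * n ! := by push_cast [Nat.factorial_succ]; ring
  have hseries := (hasSum_nat_add_iff' 1).mpr (hasSum_vecMul_exp ![α, β, γ, δ, σ] (adg536 l U))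
  simp only [Finset.range_one, Finset.sum_singleton, pow_zero, vecMul_one, Nat.factorial_zero,
    Nat.cast_one, inv_one, one_smul, vecMul_adg536_pow_succ] at hseries
  ext j
  have hj := Pi.hasSum.mp hseries j
  fin_cases j
  · have := hj.unique (((hasSum_pow_succ_div_factorial_succ (U 1)).mul_left (-γ)).congr_fun
      fun n => by simp; ring)
    simp at this ⊢; linarith
  · have := hj.unique (((((hasSum_expSubOneDiv (U 1)).mul_left (γ * (U 0 - U 2) - δ * U 3)).sub
      ((hasSum_pow_div_factorial (U 1)).mul_left (γ * U 3))).sub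
      ((hasSum_expSubOneDiv (l * U 1)).mul_left (l * σ * U 4))).congr_fun
      fun n => by simp [hfact]; field_simp; ring)
    simp at this ⊢; linarith
  · have := hj.unique (((hasSum_pow_succ_div_factorial_succ (U 1)).mul_left γ).congr_fun
      fun n => by simp; ring)
    simp at this ⊢; linarith
  · have := hj.unique ((((hasSum_pow_succ_div_factorial_succ (U 1)).mul_left δ).add
      ((hasSum_pow_div_factorial (U 1)).mul_left (γ * U 1))).congr_fun
      fun n => by simp [hfact]; field_simp; ring)
    simp at this ⊢; linarith
  · have := hj.unique (((hasSum_pow_succ_div_factorial_succ (l * U 1)).mul_left σ).congr_fun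
      fun n => by simp; ring)
    simp at this ⊢; linarith

lemma exists_vecMul_exp_adg536_eq (l α β γ δ σ a y : ℝ) (h : γ ≠ 0 ∨ δ ≠ 0 ∨ l * σ ≠ 0) :
    ∃ U : Fin 5 → ℝ, U 1 = a ∧ ![α, β, γ, δ, σ] ᵥ* NormedSpace.exp (adg536 l U) =
      ![α + γ * (1 - exp a), y, γ * exp a, (δ + γ * a) * exp a, σ * exp (l * a)] := by
  have hφ := (expSubOneDiv_pos a).ne'
  have hlφ := (expSubOneDiv_pos (l * a)).ne'
  simp_rw [vecMul_exp_adg536]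
  by_cases hγ : γ = 0
  · by_cases hδ : δ = 0
    · have hlσ : l * σ ≠ 0 := by tauto
      have hl := left_ne_zero_of_mul hlσ
      have hσ := right_ne_zero_of_mul hlσ
      refine ⟨![0, a, 0, 0, (β - y) / (l * σ * expSubOneDiv (l * a))], rfl, ?_⟩
      ext j; fin_cases j <;> simp [hγ, hδ]; field_simp; ring
    · refine ⟨![0, a, 0, (β - y) / (δ * expSubOneDiv a), 0], rfl, ?_⟩
      ext j; fin_cases j <;> simp [hγ]; field_simp; ring
  · refine ⟨![(y - β) / (γ * expSubOneDiv a), a, 0, 0, 0], rfl, ?_⟩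
    ext j; fin_cases j <;> simp; field_simp; ring

lemma orbitg536_eq_setOf (l α β γ δ σ : ℝ) (h : γ ≠ 0 ∨ δ ≠ 0 ∨ l * σ ≠ 0) :
    orbitg536 l ![α, β, γ, δ, σ] = {p | ∃ w > 0, ∃ y,
      p = ![α + γ * (1 - w), y, γ * w, (δ + γ * log w) * w, σ * w ^ l]} := by
  ext p
  constructor
  · rintro ⟨U, rfl⟩
    refine ⟨exp (U 1), exp_pos _, ?_⟩
    simp only [vecMul_exp_adg536, log_exp, ← exp_mul, mul_comm (U 1) l]
    exact ⟨_, rfl⟩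
  · rintro ⟨w, hw, y, rfl⟩
    obtain ⟨U, -, hU⟩ := exists_vecMul_exp_adg536_eq l α β γ δ σ (log w) y h
    refine ⟨U, hU.trans ?_⟩
    rw [exp_log hw, rpow_def_of_pos hw, mul_comm l]

lemma orbitg536_eq_singleton (l α β : ℝ) : orbitg536 l ![α, β, 0, 0, 0] = {![α, β, 0, 0, 0]} := by
  ext p
  simp [orbitg536, vecMul_exp_adg536]

lemma orbitg536_eq_of_gamma_ne_zero (l α β γ δ σ : ℝ) (hγ : γ ≠ 0) :
    orbitg536 l ![α, β, γ, δ, σ] = {p | ∃ x y z t s : ℝ, γ * z > 0 ∧ x = α + γ - z ∧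
      t = z * log (z / γ) + δ * z / γ ∧ s = σ * (z / γ) ^ l ∧ p = ![x, y, z, t, s]} := by
  rw [orbitg536_eq_setOf l α β γ δ σ (Or.inl hγ)]
  ext p
  constructor
  · rintro ⟨w, hw, y, rfl⟩
    have hzw : γ * w / γ = w := by field_simp
    exact ⟨_, y, γ * w, _, _, mul_mul_pos_of_ne_zero hγ hw, by ring,
      by rw [hzw]; field_simp; ring, by rw [hzw], rfl⟩
  · rintro ⟨x, y, z, t, s, hz, rfl, rfl, rfl, rfl⟩
    refine ⟨z / γ, div_pos_of_mul_pos hz, y, ?_⟩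
    ext j; fin_cases j <;> simp <;> field_simp <;> ring

lemma orbitg536_eq_of_delta_ne_zero (l α β δ σ : ℝ) (hδ : δ ≠ 0) :
    orbitg536 l ![α, β, 0, δ, σ] = {p | ∃ y t s : ℝ, δ * t > 0 ∧ s = σ * (t / δ) ^ l ∧
      p = ![α, y, 0, t, s]} := by
  rw [orbitg536_eq_setOf l α β 0 δ σ (Or.inr (Or.inl hδ))]
  ext p
  constructor
  · rintro ⟨w, hw, y, rfl⟩
    exact ⟨y, δ * w, _, mul_mul_pos_of_ne_zero hδ hw, by rw [mul_div_cancel_left₀ w hδ], by simp⟩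
  · rintro ⟨y, t, s, ht, rfl, rfl⟩
    refine ⟨t / δ, div_pos_of_mul_pos ht, y, ?_⟩
    simp [mul_div_cancel₀ t hδ]

lemma orbitg536_eq_of_sigma_ne_zero (l α β σ : ℝ) (hl : l ≠ 0) (hσ : σ ≠ 0) :
    orbitg536 l ![α, β, 0, 0, σ] = {p | ∃ y s : ℝ, σ * s > 0 ∧ p = ![α, y, 0, 0, s]} := by
  rw [orbitg536_eq_setOf l α β 0 0 σ (Or.inr (Or.inr (mul_ne_zero hl hσ)))]
  ext p
  constructor
  · rintro ⟨w, hw, y, rfl⟩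
    exact ⟨y, σ * w ^ l, mul_mul_pos_of_ne_zero hσ (rpow_pos_of_pos hw l), by simp⟩
  · rintro ⟨y, s, hs, rfl⟩
    have hsσ := div_pos_of_mul_pos hs
    refine ⟨(s / σ) ^ l⁻¹, rpow_pos_of_pos hsσ _, y, ?_⟩
    simp [rpow_inv_rpow hsσ.le hl, mul_div_cancel₀ s hσ]

theorem kOrbits_g536_general (l α β γ δ σ : ℝ) (hl0 : l ≠ 0) :
    (γ = 0 → δ = 0 → σ = 0 → orbitg536 l ![α, β, γ, δ, σ] = {![α, β, γ, δ, σ]}) ∧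
    (γ = 0 → δ = 0 → σ ≠ 0 → orbitg536 l ![α, β, γ, δ, σ] = {p | ∃ y s : ℝ, σ * s > 0 ∧ p = ![α, y, 0, 0, s]}) ∧
    (γ = 0 → δ ≠ 0 → σ = 0 → orbitg536 l ![α, β, γ, δ, σ] = {p | ∃ y t : ℝ, δ * t > 0 ∧ p = ![α, y, 0, t, 0]}) ∧
    (γ = 0 → δ ≠ 0 → σ ≠ 0 → orbitg536 l ![α, β, γ, δ, σ] = {p | ∃ y t s : ℝ, δ * t > 0 ∧ s = σ * (t / δ) ^ l ∧ p = ![α, y, 0, t, s]}) ∧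
    (γ ≠ 0 → δ = 0 → σ = 0 → orbitg536 l ![α, β, γ, δ, σ] = {p | ∃ x y z t : ℝ, γ * z > 0 ∧ x = α + γ - z ∧ t = z * Real.log (z / γ) ∧ p = ![x, y, z, t, 0]}) ∧
    (γ ≠ 0 → δ = 0 → σ ≠ 0 → orbitg536 l ![α, β, γ, δ, σ] = {p | ∃ x y z t s : ℝ, γ * z > 0 ∧ x = α + γ - z ∧ t = z * Real.log (z / γ) ∧ s = σ * (z / γ) ^ l ∧ p = ![x, y, z, t, s]}) ∧
    (γ ≠ 0 → δ ≠ 0 → σ = 0 → orbitg536 l ![α, β, γ, δ, σ] = {p | ∃ x y z t : ℝ, γ * z > 0 ∧ x = α + γ - z ∧ t = z * Real.log (z / γ) + δ * z / γ ∧ p = ![x, y, z, t, 0]}) ∧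
    (γ ≠ 0 → δ ≠ 0 → σ ≠ 0 → orbitg536 l ![α, β, γ, δ, σ] = {p | ∃ x y z t s : ℝ, γ * z > 0 ∧ x = α + γ - z ∧ t = z * Real.log (z / γ) + δ * z / γ ∧ s = σ * (z / γ) ^ l ∧ p = ![x, y, z, t, s]}) := by
  refine ⟨?_, ?_, ?_, ?_, ?_, ?_, ?_, ?_⟩
  · rintro rfl rfl rfl
    exact orbitg536_eq_singleton l α β
  · rintro rfl rfl hσ
    exact orbitg536_eq_of_sigma_ne_zero l α β σ hl0 hσ
  · rintro rfl hδ rfl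
    simpa using orbitg536_eq_of_delta_ne_zero l α β δ 0 hδ
  · rintro rfl hδ -
    exact orbitg536_eq_of_delta_ne_zero l α β δ σ hδ
  · rintro hγ rfl rfl
    simpa using orbitg536_eq_of_gamma_ne_zero l α β γ 0 0 hγ
  · rintro hγ rfl -
    simpa using orbitg536_eq_of_gamma_ne_zero l α β γ 0 σ hγ
  · rintro hγ - rfl
    simpa using orbitg536_eq_of_gamma_ne_zero l α β γ δ 0 hγ
  · rintro hγ - -
    exact orbitg536_eq_of_gamma_ne_zero l α β γ δ σ hγ

theorem kOrbits_g536 (l α β γ δ σ : ℝ) (hl0 : l ≠ 0) (hl1 : l ≠ 1) :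
    (γ = 0 → δ = 0 → σ = 0 → orbitg536 l ![α, β, γ, δ, σ] = {![α, β, γ, δ, σ]}) ∧
    (γ = 0 → δ = 0 → σ ≠ 0 → orbitg536 l ![α, β, γ, δ, σ] = {p | ∃ y s : ℝ, σ * s > 0 ∧ p = ![α, y, 0, 0, s]}) ∧
    (γ = 0 → δ ≠ 0 → σ = 0 → orbitg536 l ![α, β, γ, δ, σ] = {p | ∃ y t : ℝ, δ * t > 0 ∧ p = ![α, y, 0, t, 0]}) ∧
    (γ = 0 → δ ≠ 0 → σ ≠ 0 → orbitg536 l ![α, β, γ, δ, σ] = {p | ∃ y t s : ℝ, δ * t > 0 ∧ s = σ * (t / δ) ^ l ∧ p = ![α, y, 0, t, s]}) ∧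
    (γ ≠ 0 → δ = 0 → σ = 0 → orbitg536 l ![α, β, γ, δ, σ] = {p | ∃ x y z t : ℝ, γ * z > 0 ∧ x = α + γ - z ∧ t = z * Real.log (z / γ) ∧ p = ![x, y, z, t, 0]}) ∧
    (γ ≠ 0 → δ = 0 → σ ≠ 0 → orbitg536 l ![α, β, γ, δ, σ] = {p | ∃ x y z t s : ℝ, γ * z > 0 ∧ x = α + γ - z ∧ t = z * Real.log (z / γ) ∧ s = σ * (z / γ) ^ l ∧ p = ![x, y, z, t, s]}) ∧
    (γ ≠ 0 → δ ≠ 0 → σ = 0 → orbitg536 l ![α, β, γ, δ, σ] = {p | ∃ x y z t : ℝ, γ * z > 0 ∧ x = α + γ - z ∧ t = z * Real.log (z / γ) + δ * z / γ ∧ p = ![x, y, z, t, 0]}) ∧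
    (γ ≠ 0 → δ ≠ 0 → σ ≠ 0 → orbitg536 l ![α, β, γ, δ, σ] = {p | ∃ x y z t s : ℝ, γ * z > 0 ∧ x = α + γ - z ∧ t = z * Real.log (z / γ) + δ * z / γ ∧ s = σ * (z / γ) ^ l ∧ p = ![x, y, z, t, s]}) :=
  kOrbits_g536_general l α β γ δ σ hl0
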